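/- Let Q be a polynomial of degree k ≥ 1, m ≥ 2, b > 0. Partition the (2mk)-th roots of unity into N (those ω with |ω − 1| ≤ 2b/k) and F (the rest). Then there is an absolute constant C > 0 such that for all z on the unit circle with |z − 1| ≤ b/k: |Q(z)|^2 ≤ (m/(m−1)) max_{ω∈N} |Q(ω)|^2 + (C/(b(m−1))) max_{ω∈F} |Q(ω)|^2. -/

import Mathlib

/-!
Put `n = 2mk`, `q = (2m-1)k` and `D(X) = ∑_{i<q} (X/z)^i`. For `k ≤ r < q` the `r`-th
coefficient of `Q D` is `z^{-r} Q(z)`, so the discrete Parseval identity on the `n`-th roots of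
unity gives `n (q - k) |Q(z)|² ≤ ∑_ω |Q(ω)|² |D(ω)|²`. On the near roots bound `|Q(ω)|²` by its
maximum and use `∑_ω |D(ω)|² = n q`. On the far roots `|D(ω)| ≤ 2/|ω - z| ≤ 4/|ω - 1|`, and the
chord bound `|ω^j - 1| ≥ 4 min(j, n - j)/n` gives `∑_far |ω - 1|⁻² = O(n k / b)`. Since
`q/(q - k) = (2m-1)/(2m-2) ≤ m/(m-1)`, the claim follows with `C = 2π`.
-/

open Finset Polynomial Complex ComplexConjugate Real

theorem IsPrimitiveRoot.sum_range_pow_mul_inv_pow {K : Type*} [Field K] {ζ : K} {n r s : ℕ}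
    (hζ : IsPrimitiveRoot ζ n) (hr : r < n) (hs : s < n) :
    ∑ j ∈ range n, (ζ ^ r * (ζ ^ s)⁻¹) ^ j = if r = s then (n : K) else 0 := by
  have hζ0 : ζ ≠ 0 := hζ.ne_zero (by omega)
  split_ifs with hrs
  · simp [hrs, pow_ne_zero s hζ0]
  · have hw : ζ ^ r * (ζ ^ s)⁻¹ ≠ 1 := fun h =>
      hrs (hζ.pow_inj hr hs (by rwa [mul_inv_eq_one₀ (pow_ne_zero s hζ0)] at h))
    have hwn : (ζ ^ r * (ζ ^ s)⁻¹) ^ n = 1 := by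
      rw [mul_pow, inv_pow, pow_right_comm, pow_right_comm ζ s, hζ.pow_eq_one]
      simp
    rw [geom_sum_eq hw, hwn, sub_self, zero_div]

theorem sum_sq_norm_eval_pow_eq {ζ : ℂ} {n : ℕ} (hζ : IsPrimitiveRoot ζ n) {P : ℂ[X]}
    (hP : P.natDegree < n) :
    ∑ j ∈ range n, ‖P.eval (ζ ^ j)‖ ^ 2 = n * ∑ r ∈ range n, ‖P.coeff r‖ ^ 2 := by
  have hconj : conj ζ = ζ⁻¹ := (inv_eq_conj (hζ.norm'_eq_one (by omega))).symm
  have heval : ∀ j : ℕ, P.eval (ζ ^ j) = ∑ r ∈ range n, P.coeff r * (ζ ^ r) ^ j := fun j => by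
    rw [eval_eq_sum_range' hP]
    exact sum_congr rfl fun r _ => by rw [pow_right_comm]
  apply Complex.ofReal_injective
  push_cast
  simp only [← mul_conj']
  calc ∑ j ∈ range n, P.eval (ζ ^ j) * conj (P.eval (ζ ^ j))
      = ∑ j ∈ range n, ∑ r ∈ range n, ∑ s ∈ range n,
          P.coeff r * conj (P.coeff s) * (ζ ^ r * (ζ ^ s)⁻¹) ^ j := by
        simp only [heval, map_sum, map_mul, map_pow, hconj, sum_mul_sum]
        exact sum_congr rfl fun j _ => sum_congr rfl fun r _ => sum_congr rfl fun s _ => by ring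
    _ = ∑ r ∈ range n, ∑ s ∈ range n, P.coeff r * conj (P.coeff s) *
          ∑ j ∈ range n, (ζ ^ r * (ζ ^ s)⁻¹) ^ j := by
        simp only [mul_sum]
        rw [sum_comm]
        exact sum_congr rfl fun r _ => sum_comm
    _ = n * ∑ r ∈ range n, P.coeff r * conj (P.coeff r) := by
        rw [mul_sum]
        refine sum_congr rfl fun r hr => ?_
        rw [sum_congr rfl fun s hs =>
          by rw [hζ.sum_range_pow_mul_inv_pow (mem_range.1 hr) (mem_range.1 hs)]]
        simp only [mul_ite, mul_zero, sum_ite_eq, if_pos hr]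
        ring

noncomputable def geomKernel {R : Type*} [CommRing R] (c : R) (q : ℕ) : R[X] :=
  ∑ i ∈ range q, (C c * X) ^ i

section geomKernel

variable {R : Type*} [CommRing R] (c : R) (q : ℕ)

theorem coeff_geomKernel (r : ℕ) : (geomKernel c q).coeff r = if r < q then c ^ r else 0 := by
  simp only [geomKernel, mul_pow, ← C_pow, finsetSum_coeff, coeff_C_mul_X_pow, sum_ite_eq,
    mem_range]

theorem natDegree_geomKernel_lt (hq : 0 < q) : (geomKernel c q).natDegree < q := by
  refine lt_of_le_of_lt ((natDegree_le_iff_coeff_eq_zero).2 fun r hr => ?_) (Nat.sub_lt hq one_pos)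
  rw [coeff_geomKernel, if_neg (by omega)]

theorem eval_geomKernel_mul (w : R) :
    (geomKernel c q).eval w * (c * w - 1) = (c * w) ^ q - 1 := by
  simp [geomKernel, eval_finsetSum, geom_sum_mul]

theorem coeff_mul_geomKernel {z : R} (hcz : c * z = 1) {Q : R[X]} {r : ℕ} (hQ : Q.natDegree ≤ r)
    (hr : r < q) : (Q * geomKernel c q).coeff r = c ^ r * Q.eval z := by
  rw [coeff_mul,
    Nat.sum_antidiagonal_eq_sum_range_succ (fun a b => Q.coeff a * (geomKernel c q).coeff b),
    eval_eq_sum_range' (Nat.lt_succ_of_le hQ), mul_sum]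
  refine sum_congr rfl fun a ha => ?_
  have har : a ≤ r := Nat.lt_succ_iff.1 (mem_range.1 ha)
  rw [coeff_geomKernel, if_pos (by omega)]
  calc Q.coeff a * c ^ (r - a) = Q.coeff a * c ^ (r - a) * (c * z) ^ a := by
        rw [hcz, one_pow, mul_one]
    _ = c ^ r * (Q.coeff a * z ^ a) := by
        rw [mul_pow, ← pow_sub_mul_pow c har]
        ring

end geomKernel

section geomKernelComplex

variable {q : ℕ} {c : ℂ}

theorem norm_eval_geomKernel_mul_le (hc : ‖c‖ = 1) {w : ℂ} (hw : ‖w‖ = 1) :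
    ‖(geomKernel c q).eval w‖ * ‖c * w - 1‖ ≤ 2 := by
  rw [← norm_mul, eval_geomKernel_mul]
  calc ‖(c * w) ^ q - 1‖ ≤ ‖(c * w) ^ q‖ + ‖(1 : ℂ)‖ := norm_sub_le _ _
    _ = 2 := by rw [norm_pow, norm_mul, hc, hw]; norm_num

theorem sum_sq_norm_eval_geomKernel {ζ : ℂ} {n : ℕ} (hζ : IsPrimitiveRoot ζ n) (hc : ‖c‖ = 1)
    (hq : 0 < q) (hqn : q ≤ n) :
    ∑ j ∈ range n, ‖(geomKernel c q).eval (ζ ^ j)‖ ^ 2 = n * q := by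
  rw [sum_sq_norm_eval_pow_eq hζ ((natDegree_geomKernel_lt c q hq).trans_le hqn)]
  have hfilter : (range n).filter (· < q) = range q := by ext; simp; omega
  simp [coeff_geomKernel, apply_ite, hc, hfilter]

end geomKernelComplex

theorem norm_eval_geomKernel_inv_mul_le {q : ℕ} {z w : ℂ} (hz : ‖z‖ = 1) (hw : ‖w‖ = 1)
    (hzw : 2 * ‖z - 1‖ ≤ ‖w - 1‖) : ‖(geomKernel z⁻¹ q).eval w‖ * ‖w - 1‖ ≤ 4 := by
  have hz0 : z ≠ 0 := by rintro rfl; simp at hz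
  have hshift : ‖z⁻¹ * w - 1‖ = ‖w - z‖ := by
    rw [show z⁻¹ * w - 1 = z⁻¹ * (w - z) by field_simp, norm_mul, norm_inv, hz, inv_one, one_mul]
  have hdist : ‖w - 1‖ ≤ 2 * ‖w - z‖ := by
    have := norm_sub_le_norm_sub_add_norm_sub w z 1
    linarith
  have hD := norm_eval_geomKernel_mul_le (q := q) (by rw [norm_inv, hz, inv_one]) hw
  rw [hshift] at hD
  calc ‖(geomKernel z⁻¹ q).eval w‖ * ‖w - 1‖ ≤ ‖(geomKernel z⁻¹ q).eval w‖ * (2 * ‖w - z‖) := by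
        gcongr
    _ ≤ 4 := by linarith

theorem mul_sq_norm_eval_le_sum_mul_geomKernel {ζ : ℂ} {n k q : ℕ} (hζ : IsPrimitiveRoot ζ n)
    {Q : ℂ[X]} (hQ : Q.natDegree ≤ k) (hq : 0 < q) (hkq : k + q ≤ n) {z : ℂ} (hz : ‖z‖ = 1) :
    n * (q - k : ℕ) * ‖Q.eval z‖ ^ 2 ≤
      ∑ j ∈ range n, ‖Q.eval (ζ ^ j)‖ ^ 2 * ‖(geomKernel z⁻¹ q).eval (ζ ^ j)‖ ^ 2 := by
  have hz0 : z ≠ 0 := by rintro rfl; simp at hz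
  have hP : (Q * geomKernel z⁻¹ q).natDegree < n :=
    natDegree_mul_le.trans_lt (by have := natDegree_geomKernel_lt z⁻¹ q hq; omega)
  calc n * (q - k : ℕ) * ‖Q.eval z‖ ^ 2
      = n * ∑ r ∈ Ico k q, ‖(Q * geomKernel z⁻¹ q).coeff r‖ ^ 2 := by
        rw [sum_congr rfl fun r hr => by
          rw [coeff_mul_geomKernel z⁻¹ q (inv_mul_cancel₀ hz0) (hQ.trans (mem_Ico.1 hr).1)
            (mem_Ico.1 hr).2, norm_mul, norm_pow, norm_inv, hz]]
        simp [mul_assoc]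
    _ ≤ n * ∑ r ∈ range n, ‖(Q * geomKernel z⁻¹ q).coeff r‖ ^ 2 := by
        gcongr
        intro r hr
        simp only [mem_Ico, mem_range] at hr ⊢
        omega
    _ = _ := by
        rw [← sum_sq_norm_eval_pow_eq hζ hP]
        simp only [eval_mul, norm_mul, mul_pow]

theorem exp_two_pi_I_div_zpow (n : ℕ) (t : ℤ) :
    exp (2 * π * I / n) ^ t = exp (I * (2 * π * t / n : ℝ)) := by
  rw [← exp_int_mul]
  push_cast
  ring_nf

theorem norm_exp_two_pi_I_div_zpow_sub_one_le (n : ℕ) (t : ℤ) :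
    ‖exp (2 * π * I / n) ^ t - 1‖ ≤ 2 * π * |(t : ℝ)| / n := by
  rw [exp_two_pi_I_div_zpow]
  refine norm_exp_I_mul_ofReal_sub_one_le.trans_eq ?_
  rw [Real.norm_eq_abs, abs_div, abs_mul, abs_of_pos Real.two_pi_pos, Nat.abs_cast]

theorem le_norm_exp_two_pi_I_div_zpow_sub_one {n : ℕ} {t : ℤ} (ht : 2 * |t| ≤ n) :
    4 * |(t : ℝ)| / n ≤ ‖exp (2 * π * I / n) ^ t - 1‖ := by
  rcases Nat.eq_zero_or_pos n with rfl | hn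
  · simp
  have hn' : (0 : ℝ) < n := Nat.cast_pos.2 hn
  have ht' : 2 * |(t : ℝ)| ≤ n := by exact_mod_cast ht
  have hx : |π * t / n| ≤ π / 2 := by
    rw [abs_div, abs_mul, abs_of_pos Real.pi_pos, Nat.abs_cast, div_le_iff₀ hn']
    nlinarith [Real.pi_pos]
  rw [exp_two_pi_I_div_zpow, norm_exp_I_mul_ofReal_sub_one, norm_mul, Real.norm_eq_abs,
    Real.norm_eq_abs, abs_two, show 2 * π * t / n / 2 = π * t / n by ring]
  have hsin := Real.mul_abs_le_abs_sin hx
  rw [abs_div, abs_mul, abs_of_pos Real.pi_pos, Nat.abs_cast] at hsin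
  calc 4 * |(t : ℝ)| / n = 2 * (2 / π * (π * |(t : ℝ)| / n)) := by field_simp; ring
    _ ≤ _ := by gcongr

theorem exists_zpow_eq_pow_abs_eq_min {G₀ : Type*} [GroupWithZero G₀] {ζ : G₀} {n j : ℕ}
    (hζ : ζ ^ n = 1) (hj : j ≤ n) : ∃ t : ℤ, ζ ^ t = ζ ^ j ∧ |t| = (min j (n - j) : ℕ) := by
  rcases le_or_gt (2 * j) n with h | h
  · exact ⟨j, zpow_natCast ζ j, by rw [min_eq_left (by omega)]; simp⟩
  · have hζ0 : ζ ≠ 0 := by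
      rintro rfl
      exact zero_ne_one ((zero_pow (by omega)).symm.trans hζ)
    refine ⟨j - n, by rw [zpow_sub₀ hζ0, zpow_natCast, zpow_natCast, hζ, div_one], ?_⟩
    rw [min_eq_right (by omega), abs_of_nonpos (by omega)]
    push_cast [hj]
    ring

theorem norm_exp_two_pi_I_div_pow_sub_one_bounds {n j : ℕ} (hj : j < n) :
    4 * (min j (n - j) : ℕ) / n ≤ ‖exp (2 * π * I / n) ^ j - 1‖ ∧
      ‖exp (2 * π * I / n) ^ j - 1‖ ≤ 2 * π * (min j (n - j) : ℕ) / n := by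
  obtain ⟨t, hζt, ht⟩ :=
    exists_zpow_eq_pow_abs_eq_min (isPrimitiveRoot_exp n (by omega)).pow_eq_one hj.le
  have hcast : |(t : ℝ)| = (min j (n - j) : ℕ) := by exact_mod_cast ht
  rw [← hζt, ← hcast]
  exact ⟨le_norm_exp_two_pi_I_div_zpow_sub_one (by omega),
    norm_exp_two_pi_I_div_zpow_sub_one_le n t⟩

theorem sum_inv_sq_min_sub_le {n K : ℕ} {S : Finset ℕ} (hS : ∀ j ∈ S, K < min j (n - j)) :
    ∑ j ∈ S, (((min j (n - j) : ℕ) : ℝ) ^ 2)⁻¹ ≤ 4 / (K + 1) := by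
  classical
  rw [sum_comp (fun t : ℕ => ((t : ℝ) ^ 2)⁻¹) (fun j => min j (n - j))]
  have hfiber : ∀ t, #{j ∈ S | min j (n - j) = t} ≤ 2 := fun t =>
    (card_le_card fun j hj => by
      have := hS j (mem_filter.1 hj).1
      simp only [mem_filter, mem_insert, mem_singleton] at hj ⊢
      omega).trans (card_le_two (a := t) (b := n - t))
  calc ∑ t ∈ S.image (fun j => min j (n - j)), #{j ∈ S | min j (n - j) = t} • ((t : ℝ) ^ 2)⁻¹
      ≤ ∑ t ∈ S.image (fun j => min j (n - j)), 2 * ((t : ℝ) ^ 2)⁻¹ := by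
        refine sum_le_sum fun t _ => ?_
        rw [nsmul_eq_mul]
        gcongr
        exact_mod_cast hfiber t
    _ ≤ ∑ t ∈ Ioo K n, 2 * ((t : ℝ) ^ 2)⁻¹ := by
        refine sum_le_sum_of_subset_of_nonneg (fun t ht => ?_) fun _ _ _ => by positivity
        obtain ⟨j, hj, rfl⟩ := mem_image.1 ht
        have := hS j hj
        simp only [mem_Ioo]
        omega
    _ ≤ 2 * (2 / (K + 1)) := by
        rw [← mul_sum]
        gcongr
        exact sum_Ioo_inv_sq_le K n
    _ = 4 / (K + 1) := by ring

theorem sum_inv_sq_norm_exp_two_pi_I_div_pow_sub_one_le (n : ℕ) {δ : ℝ} (hδ : 0 < δ) :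
    ∑ j ∈ range n with δ < ‖exp (2 * π * I / n) ^ j - 1‖,
      (‖exp (2 * π * I / n) ^ j - 1‖ ^ 2)⁻¹ ≤ π * n / (2 * δ) := by
  rcases Nat.eq_zero_or_pos n with rfl | hn
  · simp
  have hn' : (0 : ℝ) < n := Nat.cast_pos.2 hn
  set ζ := exp (2 * π * I / n)
  set K := ⌊δ * n / (2 * π)⌋₊
  have hterm : ∀ j ∈ {j ∈ range n | δ < ‖ζ ^ j - 1‖}, K < min j (n - j) ∧
      (‖ζ ^ j - 1‖ ^ 2)⁻¹ ≤ n ^ 2 / 16 * (((min j (n - j) : ℕ) : ℝ) ^ 2)⁻¹ := by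
    intro j hj
    rw [mem_filter, mem_range] at hj
    obtain ⟨hlow, hup⟩ := norm_exp_two_pi_I_div_pow_sub_one_bounds hj.1
    set s := min j (n - j)
    have hKs : K < s := by
      rw [Nat.floor_lt (by positivity), div_lt_iff₀ Real.two_pi_pos]
      rw [le_div_iff₀ hn'] at hup
      nlinarith [hj.2]
    refine ⟨hKs, ?_⟩
    have hs : (0 : ℝ) < s := by exact_mod_cast (Nat.zero_le K).trans_lt hKs
    calc (‖ζ ^ j - 1‖ ^ 2)⁻¹ ≤ ((4 * s / n : ℝ) ^ 2)⁻¹ := by gcongr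
      _ = n ^ 2 / 16 * ((s : ℝ) ^ 2)⁻¹ := by field_simp; ring
  have hK : δ * n < 2 * π * (K + 1) := by
    rw [← div_lt_iff₀' Real.two_pi_pos]
    exact Nat.lt_floor_add_one _
  calc ∑ j ∈ range n with δ < ‖ζ ^ j - 1‖, (‖ζ ^ j - 1‖ ^ 2)⁻¹
      ≤ ∑ j ∈ range n with δ < ‖ζ ^ j - 1‖, n ^ 2 / 16 * (((min j (n - j) : ℕ) : ℝ) ^ 2)⁻¹ :=
        sum_le_sum fun j hj => (hterm j hj).2
    _ ≤ n ^ 2 / 16 * (4 / (K + 1)) := by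
        rw [← mul_sum]
        gcongr
        exact sum_inv_sq_min_sub_le fun j hj => (hterm j hj).1
    _ ≤ π * n / (2 * δ) := by
        rw [div_mul_div_comm, div_le_div_iff₀ (by positivity) (by positivity)]
        nlinarith

theorem mul_sq_norm_eval_le_of_near_far {n k q : ℕ} {Q : ℂ[X]} (hQ : Q.natDegree ≤ k)
    (hq : 0 < q) (hkq : k + q ≤ n) {z : ℂ} (hz : ‖z‖ = 1) {δ A B : ℝ} (hδ : 0 < δ)
    (hzδ : 2 * ‖z - 1‖ ≤ δ) (hA : 0 ≤ A) (hB : 0 ≤ B)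
    (hnear : ∀ j < n, ‖exp (2 * π * I / n) ^ j - 1‖ ≤ δ →
      ‖Q.eval (exp (2 * π * I / n) ^ j)‖ ^ 2 ≤ A)
    (hfar : ∀ j < n, δ < ‖exp (2 * π * I / n) ^ j - 1‖ →
      ‖Q.eval (exp (2 * π * I / n) ^ j)‖ ^ 2 ≤ B) :
    (q - k : ℕ) * ‖Q.eval z‖ ^ 2 ≤ q * A + 8 * π / δ * B := by
  have hn : 0 < n := by omega
  have hζ := isPrimitiveRoot_exp n hn.ne'
  set ζ := exp (2 * π * I / n)
  set D := geomKernel z⁻¹ q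
  have hsample := mul_sq_norm_eval_le_sum_mul_geomKernel hζ hQ hq hkq hz
  rw [← sum_filter_add_sum_filter_not _ (fun j => ‖ζ ^ j - 1‖ ≤ δ)] at hsample
  simp only [not_le] at hsample
  have hnear_sum : ∑ j ∈ range n with ‖ζ ^ j - 1‖ ≤ δ,
      ‖Q.eval (ζ ^ j)‖ ^ 2 * ‖D.eval (ζ ^ j)‖ ^ 2 ≤ A * (n * q) := by
    calc _ ≤ ∑ j ∈ range n with ‖ζ ^ j - 1‖ ≤ δ, A * ‖D.eval (ζ ^ j)‖ ^ 2 := by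
          refine sum_le_sum fun j hj => ?_
          rw [mem_filter, mem_range] at hj
          gcongr
          exact hnear j hj.1 hj.2
      _ ≤ A * ∑ j ∈ range n, ‖D.eval (ζ ^ j)‖ ^ 2 := by
          rw [← mul_sum]
          gcongr
          exact filter_subset _ _
      _ = A * (n * q) := by
          rw [sum_sq_norm_eval_geomKernel hζ (by rw [norm_inv, hz, inv_one]) hq (by omega)]
  have hfar_sum : ∑ j ∈ range n with δ < ‖ζ ^ j - 1‖,
      ‖Q.eval (ζ ^ j)‖ ^ 2 * ‖D.eval (ζ ^ j)‖ ^ 2 ≤ B * (16 * (π * n / (2 * δ))) := by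
    calc _ ≤ ∑ j ∈ range n with δ < ‖ζ ^ j - 1‖, B * (16 * (‖ζ ^ j - 1‖ ^ 2)⁻¹) := by
          refine sum_le_sum fun j hj => ?_
          rw [mem_filter, mem_range] at hj
          have hω : ‖ζ ^ j‖ = 1 := by rw [norm_pow, hζ.norm'_eq_one hn.ne', one_pow]
          have hpos : 0 < ‖ζ ^ j - 1‖ := hδ.trans hj.2
          have hD := norm_eval_geomKernel_inv_mul_le (q := q) hz hω (hzδ.trans hj.2.le)
          gcongr
          · exact hfar j hj.1 hj.2
          · rw [← le_div_iff₀ hpos] at hD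
            calc ‖D.eval (ζ ^ j)‖ ^ 2 ≤ (4 / ‖ζ ^ j - 1‖) ^ 2 := by gcongr
              _ = 16 * (‖ζ ^ j - 1‖ ^ 2)⁻¹ := by ring
      _ ≤ B * (16 * (π * n / (2 * δ))) := by
          rw [← mul_sum, ← mul_sum]
          gcongr
          exact sum_inv_sq_norm_exp_two_pi_I_div_pow_sub_one_le n hδ
  have hn' : (0 : ℝ) < n := Nat.cast_pos.2 hn
  refine le_of_mul_le_mul_left ?_ hn'
  calc (n : ℝ) * ((q - k : ℕ) * ‖Q.eval z‖ ^ 2) = n * (q - k : ℕ) * ‖Q.eval z‖ ^ 2 := by ring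
    _ ≤ A * (n * q) + B * (16 * (π * n / (2 * δ))) := by linarith
    _ = n * (q * A + 8 * π / δ * B) := by field_simp; ring

theorem sq_norm_eval_le_of_near_far {k m : ℕ} {b : ℝ} (hk : 1 ≤ k) (hm : 2 ≤ m) (hb : 0 < b)
    {Q : ℂ[X]} (hQ : Q.natDegree ≤ k) {z : ℂ} (hz : ‖z‖ = 1) (hzb : ‖z - 1‖ ≤ b / k)
    {A B : ℝ} (hA : 0 ≤ A) (hB : 0 ≤ B)
    (hnear : ∀ j < 2 * m * k, ‖exp (2 * π * I / ↑(2 * m * k)) ^ j - 1‖ ≤ 2 * b / k →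
      ‖Q.eval (exp (2 * π * I / ↑(2 * m * k)) ^ j)‖ ^ 2 ≤ A)
    (hfar : ∀ j < 2 * m * k, 2 * b / k < ‖exp (2 * π * I / ↑(2 * m * k)) ^ j - 1‖ →
      ‖Q.eval (exp (2 * π * I / ↑(2 * m * k)) ^ j)‖ ^ 2 ≤ B) :
    ‖Q.eval z‖ ^ 2 ≤ m / (m - 1) * A + 2 * π / (b * (m - 1)) * B := by
  have hkq : k + (2 * m - 1) * k ≤ 2 * m * k := by
    rw [Nat.sub_mul, one_mul]
    have : k ≤ 2 * m * k := Nat.le_mul_of_pos_left k (by omega)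
    omega
  have hkey := mul_sq_norm_eval_le_of_near_far hQ (Nat.mul_pos (by omega) hk) hkq hz
    (by positivity) (by rw [mul_div_assoc]; linarith) hA hB hnear hfar
  have hk' : (1 : ℝ) ≤ k := Nat.one_le_cast.2 hk
  have hm1 : (0 : ℝ) < m - 1 := by
    have : (2 : ℝ) ≤ m := Nat.ofNat_le_cast.2 hm
    linarith
  have hq : (((2 * m - 1) * k : ℕ) : ℝ) = (2 * m - 1) * k := by
    push_cast [Nat.cast_sub (by omega : 1 ≤ 2 * m)]
    ring
  rw [Nat.cast_sub (Nat.le_mul_of_pos_left k (by omega)), hq] at hkey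
  refine le_of_mul_le_mul_left ?_ (mul_pos (mul_pos two_pos hm1) (by positivity : (0 : ℝ) < k))
  calc 2 * (m - 1) * k * ‖Q.eval z‖ ^ 2 ≤ (2 * m - 1) * k * A + 8 * π / (2 * b / k) * B := by
        linarith
    _ ≤ 2 * m * k * A + 8 * π / (2 * b / k) * B := by gcongr; linarith
    _ = 2 * (m - 1) * k * (m / (m - 1) * A + 2 * π / (b * (m - 1)) * B) := by
        field_simp [hm1.ne']
        ring

theorem bddAbove_setOf_pow_eq_one {n : ℕ} (hn : 0 < n) (p : ℂ → Prop) (f : ℂ → ℝ) :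
    BddAbove {y : ℝ | ∃ ω : ℂ, ω ^ n = 1 ∧ p ω ∧ y = f ω} := by
  classical
  refine ((nthRootsFinset n (1 : ℂ)).image f).bddAbove.mono ?_
  rintro y ⟨ω, hω, -, rfl⟩
  simp only [coe_image, Set.mem_image, mem_coe, mem_nthRootsFinset hn]
  exact ⟨ω, hω, rfl⟩

/-- Near/far interpolation bound for polynomials: there is an absolute constant `C > 0` such that
for any polynomial `Q` of degree `k ≥ 1`, any `m ≥ 2` and `b > 0`, splitting the `2mk`-th roots
of unity into those with `|ω-1| ≤ 2b/k` (near) and the rest (far), every `z` on the unit circle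
with `|z-1| ≤ b/k` satisfies
`|Q(z)|² ≤ (m/(m-1)) maxₙ |Q(ω)|² + (C/(b(m-1))) max_f |Q(ω)|²`. -/
theorem interpolation_near_far :
    ∃ C : ℝ, 0 < C ∧
      ∀ (k m : ℕ) (b : ℝ), 1 ≤ k → 2 ≤ m → 0 < b →
      ∀ Q : Polynomial ℂ, Q.natDegree ≤ k →
      ∀ z : ℂ, ‖z‖ = 1 → ‖z - 1‖ ≤ b / k →
      ‖Q.eval z‖ ^ 2 ≤
        ((m : ℝ) / ((m : ℝ) - 1)) *
          sSup {y : ℝ | ∃ ω : ℂ, ω ^ (2 * m * k) = 1 ∧ ‖ω - 1‖ ≤ 2 * b / k ∧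
            y = ‖Q.eval ω‖ ^ 2}
        + (C / (b * ((m : ℝ) - 1))) *
          sSup {y : ℝ | ∃ ω : ℂ, ω ^ (2 * m * k) = 1 ∧ 2 * b / k < ‖ω - 1‖ ∧
            y = ‖Q.eval ω‖ ^ 2} := by
  refine ⟨2 * π, by positivity, fun k m b hk hm hb Q hQ z hz hzb => ?_⟩
  have hn : 0 < 2 * m * k := by positivity
  have hroot : ∀ j : ℕ, (exp (2 * π * I / ↑(2 * m * k)) ^ j) ^ (2 * m * k) = 1 := fun j => by
    rw [pow_right_comm, (isPrimitiveRoot_exp _ hn.ne').pow_eq_one, one_pow]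
  exact sq_norm_eval_le_of_near_far hk hm hb hQ hz hzb
    (Real.sSup_nonneg (by rintro _ ⟨ω, -, -, rfl⟩; positivity))
    (Real.sSup_nonneg (by rintro _ ⟨ω, -, -, rfl⟩; positivity))
    (fun j _ hj => le_csSup (bddAbove_setOf_pow_eq_one hn (‖· - 1‖ ≤ 2 * b / k)
      (‖Q.eval ·‖ ^ 2)) ⟨_, hroot j, hj, rfl⟩)
    (fun j _ hj => le_csSup (bddAbove_setOf_pow_eq_one hn (2 * b / k < ‖· - 1‖)
      (‖Q.eval ·‖ ^ 2)) ⟨_, hroot j, hj, rfl⟩)
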